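/- arXiv:1909.04895 — 9 statements merged into one kernel-verified Lean document; each statement's English description precedes it below -/
import Mathlib

section
/- For μ_x ∈ (0,1) and any complex z with |z| > 1, the quadratic equation κ² + ((z - z⁻¹)/μ_x) κ - 1 = 0 has no root κ on the unit circle |κ| = 1. -/
/-- For `μ ∈ (0,1)` and `|z| > 1`, the leap-frog characteristic equation
`κ² + ((z - z⁻¹)/μ) κ - 1 = 0` has no root on the unit circle. -/
theorem leapfrog_char_no_unit_root (μ : ℝ) (hμ0 : 0 < μ) (hμ1 : μ < 1)
    (z κ : ℂ) (hz : 1 < ‖z‖)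
    (hκ : κ ^ 2 + ((z - z⁻¹) / (μ : ℂ)) * κ - 1 = 0) :
    ‖κ‖ ≠ 1 := by
  intro h1
  have hκ0 : κ ≠ 0 := by
    intro h; rw [h] at h1; simp at h1
  have hz0 : z ≠ 0 := by
    intro h; rw [h] at hz; simp at hz; linarith
  have hμ : (μ : ℂ) ≠ 0 := by
    exact_mod_cast hμ0.ne'
  have hE : z ^ 2 - ((μ : ℂ) * (κ⁻¹ - κ)) * z - 1 = 0 := by
    have hk : κ⁻¹ * κ = 1 := inv_mul_cancel₀ hκ0
    field_simp at hκ
    linear_combination κ⁻¹ * hκ - (z ^ 2 + (μ : ℂ) * κ * z - 1) * hk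
  set s : ℝ := -2 * μ * κ.im with hs
  have hinv : κ⁻¹ = starRingEnd ℂ κ := Complex.inv_eq_conj h1
  have hIs : (μ : ℂ) * (κ⁻¹ - κ) = Complex.I * (s : ℂ) := by
    rw [hinv]
    apply Complex.ext <;> simp [hs, Complex.mul_re, Complex.mul_im] <;> ring
  rw [hIs] at hE
  have him1 : |κ.im| ≤ 1 := by
    have := Complex.abs_im_le_norm κ
    rwa [h1] at this
  have him2 : κ.im ^ 2 ≤ 1 := by
    rw [← sq_abs]; nlinarith [abs_nonneg κ.im]
  have hs2 : s ^ 2 < 4 := by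
    have h4 : s ^ 2 = 4 * μ ^ 2 * κ.im ^ 2 := by rw [hs]; ring
    nlinarith [mul_nonneg (sq_nonneg μ) (by linarith : (0:ℝ) ≤ 1 - κ.im ^ 2)]
  have hzn : 1 < z.re ^ 2 + z.im ^ 2 := by
    have h2 : 1 < ‖z‖ ^ 2 := by nlinarith
    rw [Complex.sq_norm,
      Complex.normSq_apply] at h2
    nlinarith
  have hre := congrArg Complex.re hE
  have him := congrArg Complex.im hE
  simp [Complex.ext_iff, pow_two, Complex.mul_re, Complex.mul_im] at hre him
  have hprod : z.re * (2 * z.im - s) = 0 := by linear_combination him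
  rcases mul_eq_zero.mp hprod with hx | hy
  · nlinarith [sq_nonneg (2 * z.im - s), hre, hs2, hx, sq_nonneg z.re]
  · have hy' : s = 2 * z.im := by linarith
    rw [hy'] at hre
    nlinarith [hre, hzn]
end

section
/- For μ_x ∈ (0,1) and z ∈ ℂ with |z| > 1, the two roots κ of κ² + ((z - z⁻¹)/μ_x) κ - 1 = 0 satisfy: their product equals -1, and exactly one of them has modulus strictly less than 1 while the other has modulus strictly greater than 1. -/
/-!
The two roots of `κ² + bκ - 1` have product `-1`, so their moduli are reciprocal and it suffices
to rule out a root on the unit circle. For such a root `κ` we get `b = κ⁻¹ - κ = conj κ - κ`,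
which is purely imaginary of modulus at most `2`; hence so is `z - z⁻¹ = μ b` when `|μ| ≤ 1`.
But for `|z| > 1`, `z - z⁻¹` is purely imaginary only when `z` is, and then
`|z - z⁻¹| = |z| + |z|⁻¹ > 2`.
-/

open ComplexConjugate

namespace Complex

theorem two_lt_norm_sub_inv_of_re_eq_zero {z : ℂ} (hz : 1 < ‖z‖) (hre : (z - z⁻¹).re = 0) :
    2 < ‖z - z⁻¹‖ := by
  have hnormSq : 1 < normSq z := by rw [normSq_eq_norm_sq]; nlinarith
  have hzre : z.re = 0 := by
    rw [sub_re, inv_re, sub_eq_zero, eq_div_iff (by positivity)] at hre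
    nlinarith
  have hconj : conj z = -z := Complex.ext (by simp [hzre]) (by simp)
  have hsub : z - z⁻¹ = z * ((1 + (‖z‖ ^ 2)⁻¹ : ℝ) : ℂ) := by
    rw [inv_def, hconj, normSq_eq_norm_sq]; push_cast; ring
  have hpos : 0 < ‖z‖ := by linarith
  rw [hsub, norm_mul, norm_real, Real.norm_of_nonneg (by positivity)]
  calc (2 : ℝ) < ‖z‖ + ‖z‖⁻¹ := by
        rw [← sub_pos]
        have : ‖z‖ + ‖z‖⁻¹ - 2 = (‖z‖ - 1) ^ 2 / ‖z‖ := by field_simp; ring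
        rw [this]; have := sub_pos.mpr hz; positivity
    _ = ‖z‖ * (1 + (‖z‖ ^ 2)⁻¹) := by field_simp

theorem eq_conj_sub_self_of_sq_add_mul_sub_one_eq_zero {b κ : ℂ} (hκ : κ ^ 2 + b * κ - 1 = 0)
    (hnorm : ‖κ‖ = 1) : b = conj κ - κ := by
  have hinv : κ + b = κ⁻¹ := eq_inv_of_mul_eq_one_right (by linear_combination hκ)
  rw [← inv_eq_conj hnorm, ← hinv]; ring

theorem exists_roots_sq_add_mul_sub_one (b : ℂ) :
    ∃ κ₁ κ₂ : ℂ, κ₁ * κ₂ = -1 ∧ ∀ κ, κ ^ 2 + b * κ - 1 = 0 ↔ κ = κ₁ ∨ κ = κ₂ := by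
  obtain ⟨d, hd⟩ := IsAlgClosed.exists_eq_mul_self (b ^ 2 + 4)
  refine ⟨(-b + d) / 2, (-b - d) / 2, by linear_combination hd / 4, fun κ => ?_⟩
  have hfactor : κ ^ 2 + b * κ - 1 = (κ - (-b + d) / 2) * (κ - (-b - d) / 2) := by
    linear_combination -hd / 4
  rw [hfactor, mul_eq_zero, sub_eq_zero, sub_eq_zero]

end Complex

theorem norm_ne_one_of_leapfrog_char_eq_zero {μ : ℝ} (hμ0 : μ ≠ 0) (hμ1 : |μ| ≤ 1) {z : ℂ}
    (hz : 1 < ‖z‖) {κ : ℂ} (hκ : κ ^ 2 + ((z - z⁻¹) / μ) * κ - 1 = 0) : ‖κ‖ ≠ 1 := by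
  intro hnorm
  have hb := Complex.eq_conj_sub_self_of_sq_add_mul_sub_one_eq_zero hκ hnorm
  rw [div_eq_iff (Complex.ofReal_ne_zero.mpr hμ0)] at hb
  have hre : (z - z⁻¹).re = 0 := by simp [hb]
  have hle : ‖z - z⁻¹‖ ≤ 2 := calc
    ‖z - z⁻¹‖ = |μ| * ‖conj κ - κ‖ := by
        rw [hb, norm_mul, Complex.norm_real, Real.norm_eq_abs, mul_comm]
    _ ≤ 1 * (‖conj κ‖ + ‖κ‖) := by gcongr; exact norm_sub_le _ _
    _ = 2 := by rw [Complex.norm_conj, hnorm]; norm_num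
  exact (Complex.two_lt_norm_sub_inv_of_re_eq_zero hz hre).not_ge hle

theorem lt_one_and_one_lt_or_of_mul_eq_one {a b : ℝ} (ha : 0 ≤ a) (hab : a * b = 1) (ha1 : a ≠ 1) :
    (a < 1 ∧ 1 < b) ∨ (1 < a ∧ b < 1) := by
  rcases ha1.lt_or_gt with h | h
  · exact Or.inl ⟨h, by nlinarith⟩
  · exact Or.inr ⟨h, by nlinarith⟩

/-- For `μ ∈ (0,1)` and `|z| > 1`, the characteristic equation
`κ² + ((z - z⁻¹)/μ) κ - 1 = 0` has two roots whose product is `-1`,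
one of modulus `< 1` and the other of modulus `> 1`. -/
theorem leapfrog_char_root_splitting (μ : ℝ) (hμ0 : 0 < μ) (hμ1 : μ < 1)
    (z : ℂ) (hz : 1 < ‖z‖) :
    ∃ κs κu : ℂ,
      κs ^ 2 + ((z - z⁻¹) / (μ : ℂ)) * κs - 1 = 0 ∧
      κu ^ 2 + ((z - z⁻¹) / (μ : ℂ)) * κu - 1 = 0 ∧
      κs * κu = -1 ∧ ‖κs‖ < 1 ∧ 1 < ‖κu‖ ∧
      ∀ κ : ℂ, κ ^ 2 + ((z - z⁻¹) / (μ : ℂ)) * κ - 1 = 0 → κ = κs ∨ κ = κu := by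
  obtain ⟨κ₁, κ₂, hprod, hroots⟩ := Complex.exists_roots_sq_add_mul_sub_one ((z - z⁻¹) / μ)
  have hκ₁ := (hroots κ₁).mpr (Or.inl rfl)
  have hκ₂ := (hroots κ₂).mpr (Or.inr rfl)
  have hnorm : ‖κ₁‖ * ‖κ₂‖ = 1 := by rw [← norm_mul, hprod, norm_neg, norm_one]
  have hκ₁_ne : ‖κ₁‖ ≠ 1 :=
    norm_ne_one_of_leapfrog_char_eq_zero hμ0.ne' ((abs_of_pos hμ0).trans_le hμ1.le) hz hκ₁
  rcases lt_one_and_one_lt_or_of_mul_eq_one (norm_nonneg _) hnorm hκ₁_ne with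
    ⟨h₁, h₂⟩ | ⟨h₁, h₂⟩
  · exact ⟨κ₁, κ₂, hκ₁, hκ₂, hprod, h₁, h₂, fun κ => (hroots κ).mp⟩
  · exact ⟨κ₂, κ₁, hκ₂, hκ₁, by rw [mul_comm, hprod], h₂, h₁, fun κ hκ => ((hroots κ).mp hκ).symm⟩
end

section
/- Let μ_x ∈ (0,1) and α_x := 1 - 2μ_x². Define s_0 := μ_x, s_1 := μ_x(1 - μ_x²), and for n ≥ 2, s_n := (P_{n-1}(α_x) - P_{n+1}(α_x)) / ((4n+2) μ_x) where P_n are the Legendre polynomials. Then for all n ≥ 2, s_n = ((2n-1)/(n+1)) (1 - 2μ_x²) s_{n-1} - ((n-2)/(n+1)) s_{n-2}. -/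
/-!
With `α = 1 - 2μ²` one has `s_n = T_n(α) / (2μ)` for `n ≥ 1`, where
`T_n = (P_{n-1} - P_{n+1}) / (2n+1)`; for `n = 1` this is exactly the prescribed `μ(1 - μ²)`.
Eliminating `x P_m` and `x P_{m+2}` from `x (P_m - P_{m+2})` with the Legendre recurrence
shows that `T_n` obeys the three-term recurrence of the Gegenbauer polynomials `C_{n+1}^{(-1/2)}`,
`(n+1) T_n = (2n-1) x T_{n-1} - (n-2) T_{n-2}`, which is the claim after dividing by `2μ`.
-/

noncomputable def legendreP : ℕ → ℝ → ℝ
  | 0, _ => 1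
  | 1, x => x
  | (n + 2), x =>
      ((2 * (n : ℝ) + 3) * x * legendreP (n + 1) x - ((n : ℝ) + 1) * legendreP n x)
        / ((n : ℝ) + 2)

@[simp]
lemma legendreP_zero (x : ℝ) : legendreP 0 x = 1 := by
  rw [legendreP]

@[simp]
lemma legendreP_one (x : ℝ) : legendreP 1 x = x := by
  rw [legendreP]

lemma legendreP_add_two (n : ℕ) (x : ℝ) :
    legendreP (n + 2) x =
      ((2 * (n : ℝ) + 3) * x * legendreP (n + 1) x - ((n : ℝ) + 1) * legendreP n x)
        / ((n : ℝ) + 2) := by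
  rw [legendreP]

/-- At `k = 0` the truncated `k - 1` is harmless: its coefficient vanishes. -/
lemma legendreP_three_term (k : ℕ) (x : ℝ) :
    (2 * k + 1) * x * legendreP k x = (k + 1) * legendreP (k + 1) x + k * legendreP (k - 1) x := by
  rcases k with _ | k
  · simp
  · rw [legendreP_add_two, Nat.add_sub_cancel]
    push_cast
    field_simp
    ring

lemma legendreP_sub_recurrence (m : ℕ) (x : ℝ) :
    (m + 3) * (2 * m + 1) * (legendreP (m + 1) x - legendreP (m + 3) x) =
      (2 * m + 1) * (2 * m + 5) * x * (legendreP m x - legendreP (m + 2) x)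
        - m * (2 * m + 5) * (legendreP (m - 1) x - legendreP (m + 1) x) := by
  have h₂ := legendreP_three_term (m + 2) x
  simp only [Nat.cast_add, Nat.cast_ofNat, Nat.add_succ_sub_one, add_assoc, Nat.reduceAdd] at h₂
  linear_combination (2 * m + 1) * h₂ - (2 * m + 5) * legendreP_three_term m x

/-- `T_n(x) = ∫_x^1 P_n`, since `(2n+1) P_n = P'_{n+1} - P'_{n-1}`. -/
noncomputable def legendreTail (n : ℕ) (x : ℝ) : ℝ :=
  (legendreP (n - 1) x - legendreP (n + 1) x) / (2 * n + 1)

lemma legendreTail_one (x : ℝ) : legendreTail 1 x = (1 - x ^ 2) / 2 := by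
  rw [legendreTail, Nat.sub_self, legendreP_add_two]
  push_cast
  simp only [legendreP_zero, legendreP_one]
  field_simp
  ring

lemma legendreTail_add_two (m : ℕ) (x : ℝ) :
    legendreTail (m + 2) x =
      (2 * m + 3) / (m + 3) * x * legendreTail (m + 1) x - m / (m + 3) * legendreTail m x := by
  simp only [legendreTail, Nat.add_sub_cancel, Nat.add_succ_sub_one, add_assoc, Nat.reduceAdd]
  push_cast
  field_simp
  linear_combination (2 * (m : ℝ) + 3) * legendreP_sub_recurrence m x

theorem dtbc_coefficients_recurrence_general (μ : ℝ) (hμ0 : 0 < μ)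
    (s : ℕ → ℝ)
    (hs1 : s 1 = μ * (1 - μ ^ 2))
    (hsn : ∀ n : ℕ, 2 ≤ n →
      s n = (legendreP (n - 1) (1 - 2 * μ ^ 2) - legendreP (n + 1) (1 - 2 * μ ^ 2))
        / ((4 * (n : ℝ) + 2) * μ)) :
    ∀ n : ℕ, 2 ≤ n →
      s n = ((2 * (n : ℝ) - 1) / ((n : ℝ) + 1)) * (1 - 2 * μ ^ 2) * s (n - 1)
        - (((n : ℝ) - 2) / ((n : ℝ) + 1)) * s (n - 2) := by
  have hμ : μ ≠ 0 := hμ0.ne'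
  have hs : ∀ k, 1 ≤ k → s k = legendreTail k (1 - 2 * μ ^ 2) / (2 * μ) := by
    intro k hk
    rcases hk.eq_or_lt with rfl | hk
    · rw [hs1, legendreTail_one]
      field_simp
      ring
    · rw [hsn k hk, legendreTail, div_div]
      ring_nf
  have hs_mul : ∀ m : ℕ, (m : ℝ) * s m = m * (legendreTail m (1 - 2 * μ ^ 2) / (2 * μ)) := by
    rintro (_ | m)
    · simp
    · rw [hs (m + 1) (by omega)]
  intro n hn
  obtain ⟨m, rfl⟩ : ∃ m, n = m + 2 := ⟨n - 2, by omega⟩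
  rw [hs (m + 2) (by omega), Nat.add_sub_cancel, Nat.add_succ_sub_one, hs (m + 1) (by omega),
    legendreTail_add_two]
  push_cast
  linear_combination (1 / ((m : ℝ) + 3)) * hs_mul m

/-- The DTBC convolution coefficients `s_n` of the 1D leap-frog scheme satisfy the
three-term recurrence `s_n = ((2n-1)/(n+1)) (1-2μ²) s_{n-1} - ((n-2)/(n+1)) s_{n-2}`. -/
theorem dtbc_coefficients_recurrence (μ : ℝ) (hμ0 : 0 < μ) (hμ1 : μ < 1)
    (s : ℕ → ℝ)
    (hs0 : s 0 = μ) (hs1 : s 1 = μ * (1 - μ ^ 2))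
    (hsn : ∀ n : ℕ, 2 ≤ n →
      s n = (legendreP (n - 1) (1 - 2 * μ ^ 2) - legendreP (n + 1) (1 - 2 * μ ^ 2))
        / ((4 * (n : ℝ) + 2) * μ)) :
    ∀ n : ℕ, 2 ≤ n →
      s n = ((2 * (n : ℝ) - 1) / ((n : ℝ) + 1)) * (1 - 2 * μ ^ 2) * s (n - 1)
        - (((n : ℝ) - 2) / ((n : ℝ) + 1)) * s (n - 2) :=
  dtbc_coefficients_recurrence_general μ hμ0 s hs1 hsn
end

section
/- Let μ_x ∈ (0,1), and let (σ_n)_{n≥0} satisfy σ_0 = 0, σ_1 = μ_x and σ_{n+2} = σ_n - μ_x Σ_{m=1}^{n} σ_m σ_{n+1-m}. Define s_n := σ_{2n+1}. Then s_0 = μ_x and for all n ≥ 0, s_{n+1} = s_n - μ_x Σ_{p=0}^{n} s_p s_{n-p}; in particular s_1 = μ_x(1 - μ_x²). -/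
/-- The odd-indexed Laurent coefficients `s_n := σ_{2n+1}` of the stable root satisfy
`s_0 = μ`, the convolution recurrence `s_{n+1} = s_n - μ Σ_{p=0}^n s_p s_{n-p}`,
and in particular `s_1 = μ(1-μ²)`. -/
theorem stable_root_odd_coefficients_recurrence (μ : ℝ) (hμ0 : 0 < μ) (hμ1 : μ < 1)
    (σ : ℕ → ℝ) (hσ0 : σ 0 = 0) (hσ1 : σ 1 = μ)
    (hrec : ∀ n : ℕ,
      σ (n + 2) = σ n - μ * ∑ m ∈ Finset.Icc 1 n, σ m * σ (n + 1 - m))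
    (s : ℕ → ℝ) (hs : ∀ n : ℕ, s n = σ (2 * n + 1)) :
    s 0 = μ ∧
    (∀ n : ℕ, s (n + 1) = s n - μ * ∑ p ∈ Finset.range (n + 1), s p * s (n - p)) ∧
    s 1 = μ * (1 - μ ^ 2) := by
  -- all even-indexed coefficients vanish
  have heven : ∀ k : ℕ, σ (2 * k) = 0 := by
    have H : ∀ k : ℕ, ∀ j ≤ k, σ (2 * j) = 0 := by
      intro k
      induction k with
      | zero => intro j hj; interval_cases j; simpa using hσ0
      | succ k ih =>
        intro j hj
        rcases Nat.lt_succ_iff_lt_or_eq.mp (Nat.lt_succ_of_le hj) with h | h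
        · exact ih j (Nat.lt_succ_iff.mp h)
        · subst h
          have h2 : 2 * (k + 1) = 2 * k + 2 := by ring
          rw [h2, hrec (2 * k)]
          have hsum : ∀ m ∈ Finset.Icc 1 (2 * k), σ m * σ (2 * k + 1 - m) = 0 := by
            intro m hm
            simp only [Finset.mem_Icc] at hm
            rcases Nat.even_or_odd m with ⟨j, hjm⟩ | ⟨j, hjm⟩
            · have : σ m = 0 := by
                have : m = 2 * j := by omega
                rw [this]; exact ih j (by omega)
              rw [this]; ring
            · have : σ (2 * k + 1 - m) = 0 := by
                have : 2 * k + 1 - m = 2 * (k - j) := by omega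
                rw [this]; exact ih (k - j) (by omega)
              rw [this]; ring
          rw [Finset.sum_eq_zero hsum, ih k le_rfl]; ring
    intro k; exact H k k le_rfl
  have hrec' : ∀ n : ℕ, s (n + 1) = s n - μ * ∑ p ∈ Finset.range (n + 1), s p * s (n - p) := by
    intro n
    have h1 : 2 * (n + 1) + 1 = 2 * n + 1 + 2 := by ring
    rw [hs, h1, hrec (2 * n + 1), ← hs n]
    congr 1
    congr 1
    -- reindex the sum over odd indices
    have himg : (Finset.range (n + 1)).image (fun p => 2 * p + 1) ⊆ Finset.Icc 1 (2 * n + 1) := by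
      intro m hm
      simp only [Finset.mem_image, Finset.mem_range] at hm
      obtain ⟨p, hp, rfl⟩ := hm
      simp only [Finset.mem_Icc]; omega
    rw [← Finset.sum_subset himg, Finset.sum_image (by intro a _ b _ h; simp only at h; omega)]
    · apply Finset.sum_congr rfl
      intro p hp
      simp only [Finset.mem_range] at hp
      have h2 : 2 * n + 1 + 1 - (2 * p + 1) = 2 * (n - p) + 1 := by omega
      rw [h2, hs p, hs (n - p)]
    · intro m hm hnot
      simp only [Finset.mem_Icc] at hm
      simp only [Finset.mem_image, Finset.mem_range] at hnot
      rcases Nat.even_or_odd m with ⟨j, hjm⟩ | ⟨j, hjm⟩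
      · have : σ m = 0 := by
          have : m = 2 * j := by omega
          rw [this]; exact heven j
        rw [this]; ring
      · exact absurd ⟨j, by omega, by omega⟩ hnot
  refine ⟨by rw [hs]; simpa using hσ1, hrec', ?_⟩
  have := hrec' 0
  rw [hs 0] at this
  simp only [hσ1] at this ⊢
  rw [this]
  simp [hs 0, hσ1]
  ring
end

section
/- Godunov–Ryabenkii condition for the 1D leap-frog DTBC: let μ_x ∈ (0,1) and let z ∈ ℂ with |z| > 1. If (v_j)_{j≥0} ∈ ℓ²(ℕ) satisfies (z² - 1) v_j + μ_x z (v_{j+1} - v_{j-1}) = 0 for all j ≥ 1 and the boundary relation v_0 = -κ_s⁰(z) v_1, then v_j = 0 for all j. -/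
/-!
Dividing the scheme by `μ z` gives the three-term recurrence `v (j+2) + c v (j+1) - v j = 0`
with `c = (z - z⁻¹)/μ`, whose characteristic roots are `κs` and `-1/κs`. Along the recurrence,
`w j = v (j+1) - κs v j` is multiplied by `-1/κs`, so `‖w j‖` is nondecreasing; since `v ∈ ℓ²`
forces `w → 0`, we get `w = 0`, i.e. `v j = κs ^ j v 0`. The boundary relation then reads
`(1 + κs²) v 0 = 0`, and `‖κs‖ < 1` rules out `κs² = -1`.
-/

open Filter Topology

theorem Memℓp.tendsto_atTop_zero {E : Type*} [NormedAddCommGroup E] {f : ℕ → E}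
    {p : ENNReal} (hf : Memℓp f p) (hp : 0 < p.toReal) : Tendsto f atTop (𝓝 0) := by
  have hpow : Tendsto (fun i => ‖f i‖ ^ p.toReal) atTop (𝓝 0) :=
    (hf.summable hp).tendsto_atTop_zero
  have hroot := hpow.rpow_const (p := p.toReal⁻¹) (Or.inr (inv_nonneg.mpr hp.le))
  rw [Real.zero_rpow (inv_ne_zero hp.ne')] at hroot
  refine tendsto_zero_iff_norm_tendsto_zero.mpr (hroot.congr fun i => ?_)
  exact Real.rpow_rpow_inv (norm_nonneg _) hp.ne'

theorem eq_zero_of_tendsto_zero_of_norm_monotone {E : Type*} [NormedAddCommGroup E]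
    {w : ℕ → E} (hmono : Monotone fun j => ‖w j‖) (hw : Tendsto w atTop (𝓝 0)) (j : ℕ) :
    w j = 0 :=
  norm_le_zero_iff.mp (hmono.ge_of_tendsto (by simpa using hw.norm) j)

section ThreeTermRecurrence

variable {𝕜 : Type*} [NormedField 𝕜]

theorem succ_eq_mul_of_tendsto_zero {c κ : 𝕜} (hroot : κ ^ 2 + c * κ - 1 = 0) (hκ : ‖κ‖ ≤ 1)
    {v : ℕ → 𝕜} (hrec : ∀ j, v (j + 2) + c * v (j + 1) - v j = 0)
    (hv : Tendsto v atTop (𝓝 0)) (j : ℕ) : v (j + 1) = κ * v j := by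
  set w : ℕ → 𝕜 := fun j => v (j + 1) - κ * v j
  have hw : ∀ j, κ * w (j + 1) = - w j := fun j => by
    simp only [w]
    linear_combination κ * hrec j - v (j + 1) * hroot
  have hmono : Monotone fun j => ‖w j‖ := monotone_nat_of_le_succ fun j => by
    calc ‖w j‖ = ‖κ‖ * ‖w (j + 1)‖ := by rw [← norm_mul, hw, norm_neg]
      _ ≤ ‖w (j + 1)‖ := mul_le_of_le_one_left (norm_nonneg _) hκ
  have hwt : Tendsto w atTop (𝓝 0) := by
    simpa using (hv.comp (tendsto_add_atTop_nat 1)).sub (hv.const_mul κ)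
  exact sub_eq_zero.mp (eq_zero_of_tendsto_zero_of_norm_monotone hmono hwt j)

theorem eq_zero_of_forall_succ_eq_mul_of_eq_neg_mul {κ : 𝕜} (hκ : ‖κ‖ < 1) {v : ℕ → 𝕜}
    (hstep : ∀ j, v (j + 1) = κ * v j) (hbc : v 0 = -κ * v 1) (j : ℕ) : v j = 0 := by
  have hκ2 : 1 + κ ^ 2 ≠ 0 := fun h => by
    have : ‖κ‖ ^ 2 = 1 := by rw [← norm_pow, eq_neg_of_add_eq_zero_right h, norm_neg, norm_one]
    nlinarith [norm_nonneg κ]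
  have hv0 : v 0 = 0 := by
    refine (mul_eq_zero.mp ?_).resolve_left hκ2
    linear_combination hbc - κ * hstep 0
  induction j with
  | zero => exact hv0
  | succ n ih => rw [hstep n, ih, mul_zero]

end ThreeTermRecurrence

theorem godunov_ryabenkii_1d_general (μ : ℝ) (hμ0 : 0 < μ)
    (z : ℂ) (hz : 1 < ‖z‖)
    (κs : ℂ) (hκs_root : κs ^ 2 + ((z - z⁻¹) / (μ : ℂ)) * κs - 1 = 0)
    (hκs_stable : ‖κs‖ < 1)
    (v : ℕ → ℂ) (hv : Memℓp v 2)
    (hscheme : ∀ j : ℕ, 1 ≤ j →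
      (z ^ 2 - 1) * v j + (μ : ℂ) * z * (v (j + 1) - v (j - 1)) = 0)
    (hbc : v 0 = -κs * v 1) :
    ∀ j : ℕ, v j = 0 := by
  have hz0 : z ≠ 0 := norm_pos_iff.mp (one_pos.trans hz)
  have hμ : (μ : ℂ) ≠ 0 := Complex.ofReal_ne_zero.mpr hμ0.ne'
  have hrec : ∀ j, v (j + 2) + ((z - z⁻¹) / μ) * v (j + 1) - v j = 0 := fun j => by
    have h := hscheme (j + 1) j.succ_pos
    rw [Nat.add_sub_cancel] at h
    field_simp
    linear_combination h
  have hdecay := hv.tendsto_atTop_zero (by norm_num)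
  exact eq_zero_of_forall_succ_eq_mul_of_eq_neg_mul hκs_stable
    (succ_eq_mul_of_tendsto_zero hκs_root hκs_stable.le hrec hdecay) hbc

/-- Godunov–Ryabenkii condition for the 1D leap-frog DTBC: for `μ ∈ (0,1)` and
`|z| > 1`, any `ℓ²` solution of `(z²-1) v_j + μ z (v_{j+1} - v_{j-1}) = 0` (`j ≥ 1`)
satisfying the boundary relation `v_0 = -κ_s⁰(z) v_1` vanishes identically. -/
theorem godunov_ryabenkii_1d (μ : ℝ) (hμ0 : 0 < μ) (hμ1 : μ < 1)
    (z : ℂ) (hz : 1 < ‖z‖)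
    (κs : ℂ) (hκs_root : κs ^ 2 + ((z - z⁻¹) / (μ : ℂ)) * κs - 1 = 0)
    (hκs_stable : ‖κs‖ < 1)
    (v : ℕ → ℂ) (hv : Memℓp v 2)
    (hscheme : ∀ j : ℕ, 1 ≤ j →
      (z ^ 2 - 1) * v j + (μ : ℂ) * z * (v (j + 1) - v (j - 1)) = 0)
    (hbc : v 0 = -κs * v 1) :
    ∀ j : ℕ, v j = 0 :=
  godunov_ryabenkii_1d_general μ hμ0 z hz κs hκs_root hκs_stable v hv hscheme hbc
end

section
/- For all real x with |x| ≤ 1 and t with |t| < 1, the generating function identity (1 - 2xt + t²)^{-1/2} = Σ_{n=0}^∞ P_n(x) tⁿ holds, where P_n are the Legendre polynomials defined by P_0 = 1, P_1(x) = x and (n+1)P_{n+1}(x) = (2n+1) x P_n(x) - n P_{n-1}(x). -/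
/-!
Laplace's integral `π Pₙ(x) = ∫₀^π (x + w cos θ)ⁿ dθ`, for any `w` with `w² = x² - 1`, holds
because the integrals satisfy the Legendre recurrence: the recurrence combination of the
integrands is `w` times the derivative of `(x + w cos θ)ⁿ⁺¹ sin θ`, which vanishes at `0` and `π`.
For `|x| ≤ 1` take `w = i √(1 - x²)`; then `|x + w cos θ| ≤ 1`, so `∑ Pₙ(x) tⁿ` is the integral
of a geometric series, `(1/π) ∫₀^π dθ / (1 - t x - i t √(1 - x²) cos θ)`, and this integral
equals `1 / √(1 - 2xt + t²)`.
-/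

open Real intervalIntegral

lemma legendreP_succ_succ (n : ℕ) (x : ℝ) :
    ((n : ℝ) + 2) * legendreP (n + 2) x
      = (2 * n + 3) * x * legendreP (n + 1) x - (n + 1) * legendreP n x := by
  rw [legendreP]
  field_simp

lemma laplace_recurrence_identity {R : Type*} [CommRing R] (n : ℕ) {x w c σ : R}
    (hw : w ^ 2 = x ^ 2 - 1) (hσ : σ ^ 2 + c ^ 2 = 1) :
    (n + 1) * (x + w * c) ^ n - (2 * n + 3) * x * (x + w * c) ^ (n + 1)
        + (n + 2) * (x + w * c) ^ (n + 2)
      = w * ((n + 1) * (x + w * c) ^ n * (-(w * σ)) * σ + (x + w * c) ^ (n + 1) * c) := by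
  linear_combination ((n : R) + 1) * (x + w * c) ^ n * (hw + w ^ 2 * hσ)

lemma integral_laplace_recurrence (x : ℝ) {w : ℂ} (hw : w ^ 2 = x ^ 2 - 1) (n : ℕ) :
    (n + 1) * (∫ θ in 0..π, (x + w * cos θ) ^ n)
      - (2 * n + 3) * x * (∫ θ in 0..π, (x + w * cos θ) ^ (n + 1))
      + (n + 2) * (∫ θ in 0..π, (x + w * cos θ) ^ (n + 2)) = 0 := by
  have hint (k : ℕ) : IntervalIntegrable (fun θ : ℝ => ((x : ℂ) + w * cos θ) ^ k)
      MeasureTheory.volume 0 π :=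
    (by fun_prop : Continuous fun θ : ℝ => ((x : ℂ) + w * cos θ) ^ k).intervalIntegrable _ _
  have hderiv (θ : ℝ) : HasDerivAt (fun θ : ℝ => ((x : ℂ) + w * cos θ) ^ (n + 1) * sin θ)
      ((n + 1) * (x + w * cos θ) ^ n * (-(w * sin θ)) * sin θ
        + (x + w * cos θ) ^ (n + 1) * cos θ) θ := by
    have hz : HasDerivAt (fun θ : ℝ => (x : ℂ) + w * cos θ) (-(w * sin θ)) θ := by
      simpa using ((hasDerivAt_cos θ).ofReal_comp.const_mul w).const_add (x : ℂ)
    refine ((hz.fun_pow (n + 1)).mul (hasDerivAt_sin θ).ofReal_comp).congr_deriv ?_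
    push_cast
    ring
  have hσ (θ : ℝ) : ((sin θ : ℝ) : ℂ) ^ 2 + ((cos θ : ℝ) : ℂ) ^ 2 = 1 := by
    exact_mod_cast sin_sq_add_cos_sq θ
  rw [← integral_const_mul, ← integral_const_mul, ← integral_const_mul,
    ← integral_sub ((hint n).const_mul _) ((hint _).const_mul _),
    ← integral_add (((hint n).const_mul _).sub ((hint _).const_mul _)) ((hint _).const_mul _),
    integral_congr fun θ _ => laplace_recurrence_identity n hw (hσ θ), integral_const_mul,
    integral_eq_sub_of_hasDerivAt (fun θ _ => hderiv θ)
      ((by fun_prop : Continuous _).intervalIntegrable _ _)]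
  simp

theorem legendreP_mul_pi_eq_integral (x : ℝ) {w : ℂ} (hw : w ^ 2 = x ^ 2 - 1) (n : ℕ) :
    (legendreP n x : ℂ) * π = ∫ θ in 0..π, (x + w * cos θ) ^ n := by
  induction n using Nat.twoStepInduction with
  | zero => simp [legendreP]
  | one =>
    simp only [pow_one]
    rw [integral_add intervalIntegrable_const
      ((by fun_prop : Continuous _).intervalIntegrable _ _), integral_const_mul,
      integral_ofReal (f := cos), integral_cos]
    simp [legendreP, mul_comm]
  | more n ih₀ ih₁ =>
    have hn : ((n : ℂ) + 2) ≠ 0 := by exact_mod_cast (by omega : n + 2 ≠ 0)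
    have hrec := integral_laplace_recurrence x hw n
    rw [← ih₀, ← ih₁] at hrec
    have hP := congrArg (fun r : ℝ => (r : ℂ)) (legendreP_succ_succ n x)
    push_cast at hP
    apply mul_left_cancel₀ hn
    linear_combination (π : ℂ) * hP - hrec

theorem HasDerivAt.arg_real {f : ℝ → ℂ} {f' : ℂ} {x : ℝ} (hf : HasDerivAt f f' x)
    (hx : f x ∈ Complex.slitPlane) : HasDerivAt (fun t => (f t).arg) (f' / f x).im x := by
  simpa [Function.comp_def, Complex.log_im] using
    Complex.imCLM.hasFDerivAt.comp_hasDerivAt x (hf.clog_real hx)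

theorem integral_div_sq_add_sq_mul_cos_sq {p : ℝ} (hp : 0 < p) (b : ℝ) :
    ∫ θ in 0..π, p / (p ^ 2 + b ^ 2 * cos θ ^ 2) = π / √(p ^ 2 + b ^ 2) := by
  set r := √(p ^ 2 + b ^ 2)
  have hr : 0 < r := sqrt_pos.2 (by positivity)
  have hr2 : r ^ 2 = p ^ 2 + b ^ 2 := sq_sqrt (by positivity)
  -- `w` moves through the closed right half-plane from `r i` to `-r i`, so `-arg w / r` is a
  -- continuous antiderivative on `[0, π]`.
  set w : ℝ → ℂ := fun θ => (p * sin θ : ℝ) + (r * cos θ : ℝ) * Complex.I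
  have hre (θ : ℝ) : (w θ).re = p * sin θ := by simp [w, -Complex.ofReal_sin]
  have him (θ : ℝ) : (w θ).im = r * cos θ := by simp [w, -Complex.ofReal_cos]
  set w' : ℝ → ℂ := fun θ => (p * cos θ : ℝ) + (r * -sin θ : ℝ) * Complex.I
  have hre' (θ : ℝ) : (w' θ).re = p * cos θ := by simp [w', -Complex.ofReal_cos]
  have him' (θ : ℝ) : (w' θ).im = -(r * sin θ) := by simp [w', -Complex.ofReal_sin]
  have hw (θ : ℝ) : HasDerivAt w (w' θ) θ :=
    ((hasDerivAt_sin θ).const_mul p).ofReal_comp.add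
      (((hasDerivAt_cos θ).const_mul r).ofReal_comp.mul_const Complex.I)
  have hslit : ∀ θ ∈ Set.uIcc 0 π, w θ ∈ Complex.slitPlane := by
    intro θ hθ
    rw [Set.uIcc_of_le pi_pos.le] at hθ
    rw [Complex.mem_slitPlane_iff, hre, him]
    rcases (sin_nonneg_of_nonneg_of_le_pi hθ.1 hθ.2).lt_or_eq with hsin | hsin
    · left
      positivity
    · right
      have hcos : cos θ ≠ 0 := fun h => by simpa [← hsin, h] using sin_sq_add_cos_sq θ
      exact mul_ne_zero hr.ne' hcos
  have hderiv : ∀ θ ∈ Set.uIcc 0 π,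
      HasDerivAt (fun θ => -(w θ).arg / r) (p / (p ^ 2 + b ^ 2 * cos θ ^ 2)) θ := by
    intro θ hθ
    refine (((hw θ).arg_real (hslit θ hθ)).neg.div_const r).congr_deriv ?_
    have hsc := sin_sq_add_cos_sq θ
    have hnormSq : Complex.normSq (w θ) = p ^ 2 + b ^ 2 * cos θ ^ 2 := by
      rw [Complex.normSq_apply, hre, him]
      linear_combination p ^ 2 * hsc + cos θ ^ 2 * hr2
    have hden : p ^ 2 + b ^ 2 * cos θ ^ 2 ≠ 0 := by positivity
    rw [Complex.div_im, hnormSq, hre, him, hre', him']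
    field_simp
    linear_combination hsc
  have hcont : Continuous fun θ => p / (p ^ 2 + b ^ 2 * cos θ ^ 2) := by
    fun_prop (disch := intro θ; positivity)
  have hw0 : w 0 = r * Complex.I := by simp [w]
  have hwπ : w π = r * -Complex.I := by simp [w]
  rw [integral_eq_sub_of_hasDerivAt hderiv (hcont.intervalIntegrable _ _), hwπ, hw0,
    Complex.arg_real_mul _ hr, Complex.arg_real_mul _ hr, Complex.arg_I, Complex.arg_neg_I]
  ring

theorem inv_sub_mul_I_add_inv_add_mul_I {p : ℝ} (hp : p ≠ 0) (β : ℝ) :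
    ((p : ℂ) - β * Complex.I)⁻¹ + ((p : ℂ) + β * Complex.I)⁻¹
      = ((2 * p / (p ^ 2 + β ^ 2) : ℝ) : ℂ) := by
  have h₁ : (p : ℂ) - β * Complex.I ≠ 0 := fun h => hp (by simpa using congrArg Complex.re h)
  have h₂ : (p : ℂ) + β * Complex.I ≠ 0 := fun h => hp (by simpa using congrArg Complex.re h)
  have hprod : ((p : ℂ) - β * Complex.I) * (p + β * Complex.I) = ((p ^ 2 + β ^ 2 : ℝ) : ℂ) := by
    push_cast
    linear_combination (-(β : ℂ) ^ 2) * Complex.I_sq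
  rw [inv_add_inv h₁ h₂, hprod]
  push_cast
  ring

theorem integral_inv_sub_mul_cos_mul_I {p : ℝ} (hp : 0 < p) (b : ℝ) :
    ∫ θ in 0..π, ((p : ℂ) - b * cos θ * Complex.I)⁻¹ = ((π / √(p ^ 2 + b ^ 2) : ℝ) : ℂ) := by
  set f : ℝ → ℂ := fun θ => ((p : ℂ) - b * cos θ * Complex.I)⁻¹
  have hf : Continuous f := by
    refine Continuous.inv₀ (by fun_prop) fun θ h => hp.ne' ?_
    simpa using congrArg Complex.re h
  have hreflect : ∫ θ in 0..π, f (π - θ) = ∫ θ in 0..π, f θ := by simp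
  -- `θ ↦ π - θ` conjugates the integrand, so pairing the two halves leaves its real part.
  have hsym (θ : ℝ) : f θ + f (π - θ) = ((2 * (p / (p ^ 2 + b ^ 2 * cos θ ^ 2)) : ℝ) : ℂ) := by
    have h := inv_sub_mul_I_add_inv_add_mul_I hp.ne' (b * cos θ)
    simp only [f, cos_pi_sub]
    push_cast at h ⊢
    linear_combination h
  have hsum : (∫ θ in 0..π, f θ) + ∫ θ in 0..π, f (π - θ)
      = 2 * ((π / √(p ^ 2 + b ^ 2) : ℝ) : ℂ) := by
    rw [← integral_add (hf.intervalIntegrable _ _)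
        ((by fun_prop : Continuous fun θ => f (π - θ)).intervalIntegrable _ _),
      integral_congr fun θ _ => hsym θ, integral_ofReal, integral_const_mul,
      integral_div_sq_add_sq_mul_cos_sq hp]
    push_cast
    ring
  rw [hreflect] at hsum
  linear_combination hsum / 2

theorem hasSum_intervalIntegral_pow {𝕜 : Type*} [NormedDivisionRing 𝕜] [NormedSpace ℝ 𝕜]
    {f : ℝ → 𝕜} (hf : Continuous f) {q : ℝ} (hq : q < 1) (hfq : ∀ θ, ‖f θ‖ ≤ q) (a b : ℝ) :
    HasSum (fun n : ℕ => ∫ θ in a..b, f θ ^ n) (∫ θ in a..b, (1 - f θ)⁻¹) := by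
  have hq₀ : 0 ≤ q := (norm_nonneg _).trans (hfq 0)
  refine hasSum_integral_of_dominated_convergence (fun n _ => q ^ n)
    (fun n => (hf.pow n).aestronglyMeasurable) (fun n => ?_)
    (.of_forall fun _ _ => summable_geometric_of_lt_one hq₀ hq) intervalIntegrable_const
    (.of_forall fun θ _ => hasSum_geometric_of_norm_lt_one ((hfq θ).trans_lt hq))
  exact .of_forall fun θ _ =>
    (norm_pow (f θ) n).trans_le (pow_le_pow_left₀ (norm_nonneg _) (hfq θ) n)

lemma norm_ofReal_add_mul_cos_le_one {x s : ℝ} (hs : s ^ 2 = 1 - x ^ 2) (θ : ℝ) :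
    ‖(x : ℂ) + s * Complex.I * cos θ‖ ≤ 1 := by
  have h : (x : ℂ) + s * Complex.I * cos θ = x + ((s * cos θ : ℝ) : ℂ) * Complex.I := by
    push_cast
    ring
  rw [h, Complex.norm_add_mul_I, sqrt_le_one, mul_pow]
  nlinarith [mul_nonneg (sq_nonneg s) (sub_nonneg.2 (cos_sq_le_one θ))]

/-- Generating function of the Legendre polynomials:
`1/√(1 - 2xt + t²) = Σ_{n≥0} P_n(x) tⁿ` for `|x| ≤ 1`, `|t| < 1`. -/
theorem legendre_generating_function (x t : ℝ) (hx : |x| ≤ 1) (ht : |t| < 1) :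
    HasSum (fun n : ℕ => legendreP n x * t ^ n)
      (1 / Real.sqrt (1 - 2 * x * t + t ^ 2)) := by
  set s := √(1 - x ^ 2)
  have hs : s ^ 2 = 1 - x ^ 2 := sq_sqrt (sub_nonneg.2 ((sq_le_one_iff_abs_le_one x).2 hx))
  have hw : ((s : ℂ) * Complex.I) ^ 2 = x ^ 2 - 1 := by
    rw [mul_pow, Complex.I_sq, ← Complex.ofReal_pow, hs]
    push_cast
    ring
  have hnorm (θ : ℝ) : ‖(t : ℂ) * (x + s * Complex.I * cos θ)‖ ≤ |t| := by
    rw [norm_mul, Complex.norm_real, Real.norm_eq_abs]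
    exact mul_le_of_le_one_right (abs_nonneg t) (norm_ofReal_add_mul_cos_le_one hs θ)
  have hsum := hasSum_intervalIntegral_pow (by fun_prop) ht hnorm 0 π
  have hterm (n : ℕ) : ∫ θ in 0..π, ((t : ℂ) * (x + s * Complex.I * cos θ)) ^ n
      = ((legendreP n x * t ^ n : ℝ) : ℂ) * π := by
    simp_rw [mul_pow]
    rw [integral_const_mul, ← legendreP_mul_pi_eq_integral x hw]
    push_cast
    ring
  have hp : 0 < 1 - t * x := sub_pos.2 <| (le_abs_self _).trans_lt <| by
    rw [abs_mul]
    exact mul_lt_one_of_nonneg_of_lt_one_left (abs_nonneg t) ht hx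
  have hlimit : ∫ θ in 0..π, (1 - (t : ℂ) * (x + s * Complex.I * cos θ))⁻¹
      = ((1 / √(1 - 2 * x * t + t ^ 2) : ℝ) : ℂ) * π := by
    rw [integral_congr (g := fun θ => (((1 - t * x : ℝ) : ℂ) - (t * s : ℝ) * cos θ * Complex.I)⁻¹)
      fun θ _ => by push_cast; ring_nf, integral_inv_sub_mul_cos_mul_I hp,
      show (1 - t * x) ^ 2 + (t * s) ^ 2 = 1 - 2 * x * t + t ^ 2 by linear_combination t ^ 2 * hs]
    push_cast
    ring
  simp_rw [hterm, hlimit] at hsum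
  exact_mod_cast (hasSum_mul_right_iff (Complex.ofReal_ne_zero.2 pi_ne_zero)).1 hsum
end

section
/- Godunov–Ryabenkii condition for the 2D zero-order DTBC: let μ_x ∈ (0,1), μ_y ≥ 0 with μ_x + μ_y < 1, let θ ∈ ℝ and z ∈ ℂ with |z| > 1. If (v_j)_{j≥0} ∈ ℓ²(ℕ) satisfies (z² - 1) v_j + μ_x z (v_{j+1} - v_{j-1}) + 2i sin θ · z v_j = 0 for all j ≥ 1 together with v_0 = -κ_s⁰(z) v_1, then v = 0. -/
open Filter Topology

private lemma memℓp_two_tendsto_zero (v : ℕ → ℂ) (hv : Memℓp v 2) :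
    Tendsto v atTop (𝓝 0) := by
  have h2 : (0:ℝ) < (2 : ENNReal).toReal := by norm_num
  have hs := hv.summable h2
  have h := hs.tendsto_atTop_zero
  rw [tendsto_zero_iff_norm_tendsto_zero]
  have h3 : Tendsto (fun i => Real.sqrt (‖v i‖ ^ (2 : ENNReal).toReal)) atTop
      (𝓝 (Real.sqrt 0)) := (Real.continuous_sqrt.tendsto 0).comp h
  simpa [ENNReal.toReal_ofNat, Real.rpow_two,
    Real.sqrt_sq (norm_nonneg _)] using h3

private lemma geom_helper (κ1 κ2 κs A B : ℂ) (h12 : ‖κ1‖ ≤ ‖κ2‖)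
    (hprod : κ1 * κ2 = -1) (hκs : ‖κs‖ < 1) (v : ℕ → ℂ)
    (hform : ∀ j, v j = A * κ1 ^ j + B * κ2 ^ j)
    (hlim : Tendsto v atTop (𝓝 0))
    (hbc : v 0 = -κs * v 1) : ∀ j, v j = 0 := by
  have hn : ‖κ1‖ * ‖κ2‖ = 1 := by
    rw [← norm_mul, hprod]; simp
  have hκ2pos : 0 < ‖κ2‖ := by nlinarith [norm_nonneg κ1, norm_nonneg κ2]
  have hκ2one : 1 ≤ ‖κ2‖ := by nlinarith
  have hκ1one : ‖κ1‖ ≤ 1 := by nlinarith [norm_nonneg κ1]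
  have hκ2ne : κ2 ≠ 0 := by
    intro h; rw [h] at hκ2pos; simp at hκ2pos
  obtain ⟨r, hr⟩ : ∃ r : ℂ, r = κ1 / κ2 := ⟨_, rfl⟩
  have hw : ∀ j, v j / κ2 ^ j = A * r ^ j + B := by
    intro j
    rw [hform, hr, div_pow]
    field_simp
  have hwlim : Tendsto (fun j => A * r ^ j + B) atTop (𝓝 0) := by
    refine Tendsto.congr hw (squeeze_zero_norm (fun j => ?_)
      (tendsto_zero_iff_norm_tendsto_zero.mp hlim))
    rw [norm_div, norm_pow]
    exact div_le_self (norm_nonneg _) (one_le_pow₀ hκ2one)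
  rcases lt_or_eq_of_le h12 with hlt | heq
  · -- ‖κ1‖ < ‖κ2‖, so ‖r‖ < 1
    have hrlt : ‖r‖ < 1 := by
      rw [hr, norm_div, div_lt_one hκ2pos]; exact hlt
    have hlim2 : Tendsto (fun j : ℕ => A * r ^ j + B) atTop (𝓝 (A * 0 + B)) :=
      ((tendsto_pow_atTop_nhds_zero_of_norm_lt_one hrlt).const_mul A).add
        tendsto_const_nhds
    have hB : B = 0 := by
      have := tendsto_nhds_unique hwlim hlim2
      simpa using this.symm
    have hA : A = 0 := by
      have h0 : v 0 = A := by simp [hform, hB]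
      have h1 : v 1 = A * κ1 := by simp [hform, hB]
      have hfac : A * (1 + κs * κ1) = 0 := by
        rw [h0, h1] at hbc; linear_combination hbc
      rcases mul_eq_zero.mp hfac with h | h
      · exact h
      · exfalso
        have h' : κs * κ1 = -1 := by linear_combination h
        have h'' : ‖κs * κ1‖ = 1 := by rw [h']; simp
        rw [norm_mul] at h''
        nlinarith [norm_nonneg κs, norm_nonneg κ1]
    intro j; simp [hform, hA, hB]
  · -- ‖κ1‖ = ‖κ2‖ = 1
    have hκ1eq : ‖κ1‖ = 1 := by nlinarith
    have hκ2eq : ‖κ2‖ = 1 := heq ▸ hκ1eq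
    have hrn : ‖r‖ = 1 := by
      rw [hr, norm_div, hκ1eq, hκ2eq]; norm_num
    by_cases hr1 : r = 1
    · -- κ1 = κ2
      have hκeq : κ1 = κ2 := by
        rw [hr] at hr1
        field_simp at hr1; exact hr1
      have hAB : A + B = 0 := by
        have : Tendsto (fun _ : ℕ => A + B) atTop (𝓝 0) := by
          refine hwlim.congr fun j => ?_
          rw [hr1]; simp
        exact tendsto_nhds_unique tendsto_const_nhds this
      intro j
      rw [hform, hκeq]
      linear_combination κ2 ^ j * hAB
    · have hB : B = 0 := by
        have hlimsh : Tendsto (fun j : ℕ => A * r ^ (j + 1) + B) atTop (𝓝 0) := by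
          exact hwlim.comp (tendsto_add_atTop_nat 1)
        have hdiff : Tendsto (fun j : ℕ => (A * r ^ (j + 1) + B) - r * (A * r ^ j + B))
            atTop (𝓝 (0 - r * 0)) := hlimsh.sub (hwlim.const_mul r)
        have hconst : ∀ j : ℕ, (A * r ^ (j + 1) + B) - r * (A * r ^ j + B) = B * (1 - r) := by
          intro j; ring
        have h0 : B * (1 - r) = 0 := by
          have ht : Tendsto (fun _ : ℕ => B * (1 - r)) atTop (𝓝 0) := by
            simpa using hdiff.congr hconst
          exact tendsto_nhds_unique tendsto_const_nhds ht
        rcases mul_eq_zero.mp h0 with h | h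
        · exact h
        · exact absurd (by linear_combination -h) hr1
      have hA : A = 0 := by
        have h0 : Tendsto (fun j : ℕ => ‖A * r ^ j + B‖) atTop (𝓝 0) := by
          simpa using hwlim.norm
        have hconst : ∀ j : ℕ, ‖A * r ^ j + B‖ = ‖A‖ := by
          intro j; rw [hB]; simp [norm_mul, norm_pow, hrn]
        have h1 : ‖A‖ = 0 := by
          have ht : Tendsto (fun _ : ℕ => ‖A‖) atTop (𝓝 0) := h0.congr hconst
          exact tendsto_nhds_unique tendsto_const_nhds ht
        simpa using h1
      intro j; simp [hform, hA, hB]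

/-- Godunov–Ryabenkii condition for the 2D zero-order DTBC: any `ℓ²` normal-mode
profile of the Fourier-transformed 2D leap-frog scheme satisfying the zero-order
transparent boundary relation `v_0 = -κ_s⁰(z) v_1` vanishes identically. -/
theorem godunov_ryabenkii_2d_order0 (μx μy : ℝ) (hμx0 : 0 < μx) (hμx1 : μx < 1)
    (hμy : 0 ≤ μy) (hcfl : μx + μy < 1)
    (θ : ℝ) (z : ℂ) (hz : 1 < ‖z‖)
    (κs : ℂ) (hκs_root : κs ^ 2 + ((z - z⁻¹) / (μx : ℂ)) * κs - 1 = 0)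
    (hκs_stable : ‖κs‖ < 1)
    (v : ℕ → ℂ) (hv : Memℓp v 2)
    (hscheme : ∀ j : ℕ, 1 ≤ j →
      (z ^ 2 - 1) * v j + (μx : ℂ) * z * (v (j + 1) - v (j - 1))
        + 2 * Complex.I * (Real.sin θ : ℂ) * z * v j = 0)
    (hbc : v 0 = -κs * v 1) :
    ∀ j : ℕ, v j = 0 := by
  have hz0 : z ≠ 0 := by
    intro h; rw [h] at hz; simp at hz; linarith
  have hμ : (μx : ℂ) ≠ 0 := by
    exact_mod_cast hμx0.ne'
  obtain ⟨c, hrec⟩ : ∃ c : ℂ, ∀ k : ℕ, v (k + 2) = v k - c * v (k + 1) := by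
    refine ⟨(z ^ 2 - 1 + 2 * Complex.I * (Real.sin θ : ℂ) * z) / ((μx : ℂ) * z), fun k => ?_⟩
    have h := hscheme (k + 1) (Nat.le_add_left 1 k)
    simp only [Nat.add_sub_cancel] at h
    field_simp
    rw [Complex.ofReal_sin] at h ⊢
    linear_combination h
  have hlim := memℓp_two_tendsto_zero v hv
  obtain ⟨s, hs⟩ : ∃ s : ℂ, s ^ 2 = c ^ 2 + 4 :=
    IsAlgClosed.exists_pow_nat_eq (c ^ 2 + 4) (by norm_num : 0 < 2)
  by_cases hs0 : s = 0
  · -- double root κ = -c/2, κ² = -1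
    obtain ⟨κ, hκ2, hcκ⟩ : ∃ κ : ℂ, κ ^ 2 = -1 ∧ c = -2 * κ := by
      refine ⟨-c / 2, ?_, by ring⟩
      have hc2 : c ^ 2 = -4 := by
        rw [hs0] at hs; linear_combination -hs
      linear_combination hc2 / 4
    have hκn : ‖κ‖ = 1 := by
      have h1 : ‖κ‖ ^ 2 = 1 := by
        rw [← norm_pow, hκ2]; simp
      nlinarith [norm_nonneg κ]
    have hκne : κ ≠ 0 := by
      intro h; rw [h] at hκ2; simp at hκ2
    obtain ⟨B, hB1⟩ : ∃ B : ℂ, v 1 = (v 0 + B) * κ :=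
      ⟨v 1 * κ⁻¹ - v 0, by field_simp; ring⟩
    have hform : ∀ j : ℕ, v j = (v 0 + B * j) * κ ^ j := by
      have key : ∀ j : ℕ, v j = (v 0 + B * j) * κ ^ j ∧
          v (j + 1) = (v 0 + B * ((j : ℂ) + 1)) * κ ^ (j + 1) := by
        intro j
        induction j with
        | zero =>
          refine ⟨by simp, ?_⟩
          simpa using hB1
        | succ n ih =>
          constructor
          · push_cast
            exact ih.2
          · have h2 := hrec n
            rw [ih.1, ih.2, hcκ] at h2
            rw [h2]
            push_cast
            linear_combination (v 0 + B * n) * κ ^ n * hκ2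
      exact fun j => (key j).1
    have hwlim : Tendsto (fun j : ℕ => v 0 + B * j) atTop (𝓝 0) := by
      rw [tendsto_zero_iff_norm_tendsto_zero]
      have hnr : ∀ j : ℕ, ‖v 0 + B * (j : ℂ)‖ = ‖v j‖ := by
        intro j
        rw [hform j, norm_mul, norm_pow, hκn]
        simp
      exact Tendsto.congr (fun j => (hnr j).symm)
        (tendsto_zero_iff_norm_tendsto_zero.mp hlim)
    have hB : B = 0 := by
      have hdiff : Tendsto (fun j : ℕ => (v 0 + B * ((j : ℂ) + 1)) - (v 0 + B * j))
          atTop (𝓝 (0 - 0)) := by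
        refine Tendsto.sub ?_ hwlim
        have h1 : Tendsto (fun j : ℕ => v 0 + B * ((j : ℂ) + 1)) atTop (𝓝 0) := by
          have h2 : Tendsto (fun j : ℕ => v 0 + B * ((j + 1 : ℕ) : ℂ)) atTop (𝓝 0) := by
            exact hwlim.comp (tendsto_add_atTop_nat 1)
          refine h2.congr fun j => ?_
          push_cast; ring
        exact h1
      have hconst : ∀ j : ℕ, (v 0 + B * ((j : ℂ) + 1)) - (v 0 + B * j) = B := by
        intro j; ring
      have ht : Tendsto (fun _ : ℕ => B) atTop (𝓝 0) := by
        simpa using hdiff.congr hconst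
      exact tendsto_nhds_unique tendsto_const_nhds ht
    have hv0 : v 0 = 0 := by
      have ht : Tendsto (fun _ : ℕ => v 0) atTop (𝓝 0) := by
        refine hwlim.congr fun j => ?_
        rw [hB]; ring
      exact tendsto_nhds_unique tendsto_const_nhds ht
    intro j
    rw [hform j, hv0, hB]
    simp
  · -- distinct roots
    obtain ⟨κ1, κ2, hprodK, hchar1, hchar2, hne⟩ :
        ∃ κ1 κ2 : ℂ, κ1 * κ2 = -1 ∧ κ1 ^ 2 = 1 - c * κ1 ∧ κ2 ^ 2 = 1 - c * κ2 ∧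
          κ1 - κ2 ≠ 0 := by
      refine ⟨(-c + s) / 2, (-c - s) / 2, by linear_combination -hs / 4,
        by linear_combination hs / 4, by linear_combination hs / 4, fun h => hs0 ?_⟩
      linear_combination h
    obtain ⟨A, B, hA0, hA1⟩ : ∃ A B : ℂ, v 0 = A + B ∧ v 1 = A * κ1 + B * κ2 := by
      refine ⟨(v 1 - κ2 * v 0) / (κ1 - κ2), (κ1 * v 0 - v 1) / (κ1 - κ2), ?_, ?_⟩
      · field_simp; ring
      · field_simp; ring
    have hform : ∀ j : ℕ, v j = A * κ1 ^ j + B * κ2 ^ j := by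
      have key : ∀ j : ℕ, v j = A * κ1 ^ j + B * κ2 ^ j ∧
          v (j + 1) = A * κ1 ^ (j + 1) + B * κ2 ^ (j + 1) := by
        intro j
        induction j with
        | zero =>
          exact ⟨by simpa using hA0, by simpa using hA1⟩
        | succ n ih =>
          refine ⟨ih.2, ?_⟩
          have h2 := hrec n
          rw [ih.1, ih.2] at h2
          rw [h2]
          linear_combination -A * κ1 ^ n * hchar1 - B * κ2 ^ n * hchar2
      exact fun j => (key j).1
    rcases le_total ‖κ1‖ ‖κ2‖ with h12 | h12
    · exact geom_helper κ1 κ2 κs A B h12 hprodK hκs_stable v hform hlim hbc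
    · exact geom_helper κ2 κ1 κs B A h12 (by rw [mul_comm]; exact hprodK)
        hκs_stable v (fun j => by rw [hform j]; ring) hlim hbc
end

section
/- For μ_x ∈ (0,1), μ_y > 0, θ ∈ ℝ, and z ∈ ℂ with |z| > 1, the 2D leap-frog characteristic equation (z² - 1)κ + μ_x z (κ² - 1) + 2i μ_y sin θ · z κ = 0 has no root κ with |κ| = 1, and its two roots have product equal to -1; hence exactly one root κ_s(z,θ) satisfies |κ_s(z,θ)| < 1. -/
/-- Root splitting for the 2D leap-frog characteristic equation
`(z²-1)κ + μ_x z (κ²-1) + 2i μ_y sin θ · z κ = 0` with `|z| > 1`: no root lies on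
the unit circle, the two roots have product `-1`, and exactly one root has
modulus `< 1`. -/
theorem leapfrog_2d_root_splitting (μx μy : ℝ) (hμx0 : 0 < μx) (hμx1 : μx < 1)
    (hμy : 0 < μy) (hcfl : μx + μy < 1)
    (θ : ℝ) (z : ℂ) (hz : 1 < ‖z‖) :
    (∀ κ : ℂ, (z ^ 2 - 1) * κ + (μx : ℂ) * z * (κ ^ 2 - 1)
        + 2 * Complex.I * (μy : ℂ) * (Real.sin θ : ℂ) * z * κ = 0 → ‖κ‖ ≠ 1) ∧
    ∃ κs κu : ℂ,
      ((z ^ 2 - 1) * κs + (μx : ℂ) * z * (κs ^ 2 - 1)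
        + 2 * Complex.I * (μy : ℂ) * (Real.sin θ : ℂ) * z * κs = 0) ∧
      ((z ^ 2 - 1) * κu + (μx : ℂ) * z * (κu ^ 2 - 1)
        + 2 * Complex.I * (μy : ℂ) * (Real.sin θ : ℂ) * z * κu = 0) ∧
      κs * κu = -1 ∧ ‖κs‖ < 1 ∧ 1 < ‖κu‖ ∧
      ∀ κ : ℂ, (z ^ 2 - 1) * κ + (μx : ℂ) * z * (κ ^ 2 - 1)
          + 2 * Complex.I * (μy : ℂ) * (Real.sin θ : ℂ) * z * κ = 0 →
        κ = κs ∨ κ = κu := by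
  have hz0 : z ≠ 0 := by
    intro h; rw [h] at hz; simp at hz; linarith
  obtain ⟨a, ha⟩ : ∃ a : ℂ, a = (μx : ℂ) * z := ⟨_, rfl⟩
  obtain ⟨b, hb⟩ : ∃ b : ℂ,
      b = z ^ 2 - 1 + 2 * Complex.I * (μy : ℂ) * (Real.sin θ : ℂ) * z := ⟨_, rfl⟩
  have ha0 : a ≠ 0 := by
    rw [ha]; exact mul_ne_zero (by exact_mod_cast hμx0.ne') hz0
  have heq : ∀ κ : ℂ, (z ^ 2 - 1) * κ + (μx : ℂ) * z * (κ ^ 2 - 1)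
      + 2 * Complex.I * (μy : ℂ) * (Real.sin θ : ℂ) * z * κ
      = a * κ ^ 2 + b * κ + (-a) := by intro κ; rw [ha, hb]; ring
  -- Step 1: no root on the unit circle
  have hnone : ∀ κ : ℂ, a * κ ^ 2 + b * κ + (-a) = 0 → ‖κ‖ ≠ 1 := by
    intro κ hroot hk1
    have hk1' : ‖κ‖ = 1 := hk1
    have hκ0 : κ ≠ 0 := by intro h; rw [h] at hk1'; simp at hk1'
    obtain ⟨c, hc⟩ : ∃ c : ℝ, c = μx * κ.im + μy * Real.sin θ := ⟨_, rfl⟩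
    have hconj : (starRingEnd ℂ) κ = κ⁻¹ := by
      rw [Complex.inv_def, Complex.normSq_eq_norm_sq, hk1']
      simp
    have hsub : κ - κ⁻¹ = 2 * (κ.im : ℂ) * Complex.I := by
      rw [← hconj, Complex.sub_conj]; push_cast; ring
    have hzc : z ^ 2 - 1 + 2 * Complex.I * (c : ℂ) * z = 0 := by
      have h1 : (a * κ ^ 2 + b * κ + (-a)) * κ⁻¹ = 0 := by rw [hroot]; simp
      have h2 : a * (κ - κ⁻¹) + b = 0 := by
        field_simp at h1 ⊢
        linear_combination h1
      rw [hsub, ha, hb] at h2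
      rw [hc]
      push_cast at h2 ⊢
      linear_combination h2
    have him : |κ.im| ≤ 1 := by
      have h := Complex.abs_im_le_norm κ
      rwa [hk1'] at h
    have hcb : |c| ≤ μx + μy := by
      rw [hc]
      calc |μx * κ.im + μy * Real.sin θ| ≤ |μx * κ.im| + |μy * Real.sin θ| :=
            abs_add_le _ _
        _ ≤ μx * 1 + μy * 1 := by
            rw [abs_mul, abs_mul, abs_of_pos hμx0, abs_of_pos hμy]
            gcongr
            all_goals first | exact him | exact Real.abs_sin_le_one θ
        _ = μx + μy := by ring
    have hc1 : c ^ 2 ≤ 1 := by nlinarith [abs_nonneg c, sq_abs c]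
    obtain ⟨r, hr⟩ : ∃ r : ℝ, r = Real.sqrt (1 - c ^ 2) := ⟨_, rfl⟩
    have hr2 : r ^ 2 = 1 - c ^ 2 := by rw [hr]; exact Real.sq_sqrt (by linarith)
    have hr2' : ((r : ℂ)) ^ 2 = 1 - ((c : ℂ)) ^ 2 := by
      have := congrArg (fun t : ℝ => (t : ℂ)) hr2
      push_cast at this
      exact this
    have hsq : (z + Complex.I * (c : ℂ)) ^ 2 = ((r : ℂ)) ^ 2 := by
      rw [hr2']
      linear_combination hzc + (c : ℂ) ^ 2 * Complex.I_sq
    have hfac : (z + Complex.I * c - r) * (z + Complex.I * c + r) = 0 := by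
      linear_combination hsq
    have hzn : ‖z‖ ^ 2 = 1 := by
      have hns : Complex.normSq z = 1 := by
        rcases mul_eq_zero.mp hfac with h | h
        · have hzv : z = (r : ℂ) - Complex.I * c := by linear_combination h
          rw [hzv]; simp [Complex.normSq_apply]; nlinarith [hr2]
        · have hzv : z = -(r : ℂ) - Complex.I * c := by linear_combination h
          rw [hzv]; simp [Complex.normSq_apply]; nlinarith [hr2]
      rw [Complex.sq_norm, hns]
    nlinarith [hz]
  -- Step 2: the two roots
  obtain ⟨w, hw⟩ := IsAlgClosed.exists_pow_nat_eq (k := ℂ) (b ^ 2 + 4 * a ^ 2)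
    (n := 2) (by norm_num)
  obtain ⟨κ₁, hκ₁⟩ : ∃ κ₁ : ℂ, κ₁ = (-b + w) / (2 * a) := ⟨_, rfl⟩
  obtain ⟨κ₂, hκ₂⟩ : ∃ κ₂ : ℂ, κ₂ = (-b - w) / (2 * a) := ⟨_, rfl⟩
  have hroot₁ : a * κ₁ ^ 2 + b * κ₁ + (-a) = 0 := by
    rw [hκ₁]; field_simp; linear_combination hw
  have hroot₂ : a * κ₂ ^ 2 + b * κ₂ + (-a) = 0 := by
    rw [hκ₂]; field_simp; linear_combination hw
  have hprod : κ₁ * κ₂ = -1 := by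
    rw [hκ₁, hκ₂]; field_simp; linear_combination -hw
  have hall : ∀ κ : ℂ, a * κ ^ 2 + b * κ + (-a) = 0 → κ = κ₁ ∨ κ = κ₂ := by
    intro κ hroot
    have hfac : a * (κ - κ₁) * (κ - κ₂) = 0 := by
      rw [hκ₁, hκ₂]
      field_simp
      linear_combination -hw + 4 * a * hroot
    rcases mul_eq_zero.mp hfac with h | h
    · rcases mul_eq_zero.mp h with h' | h'
      · exact absurd h' ha0
      · left; linear_combination h'
    · right; linear_combination h
  have hnorm : ‖κ₁‖ * ‖κ₂‖ = 1 := by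
    rw [← norm_mul, hprod]; simp
  have hn₁ : ‖κ₁‖ ≠ 1 := hnone κ₁ hroot₁
  have hn₂ : ‖κ₂‖ ≠ 1 := hnone κ₂ hroot₂
  refine ⟨fun κ hκ => hnone κ (by rw [← heq κ]; exact hκ), ?_⟩
  rcases lt_or_gt_of_ne hn₁ with h1 | h1
  · have h2 : 1 < ‖κ₂‖ := by
      rcases lt_trichotomy (‖κ₂‖) 1 with h | h | h
      · nlinarith [norm_nonneg κ₁, norm_nonneg κ₂]
      · exact absurd h hn₂
      · exact h
    exact ⟨κ₁, κ₂, by rw [heq κ₁]; exact hroot₁, by rw [heq κ₂]; exact hroot₂,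
      hprod, h1, h2, fun κ hκ => hall κ (by rw [← heq κ]; exact hκ)⟩
  · have h2 : ‖κ₂‖ < 1 := by
      rcases lt_trichotomy (‖κ₂‖) 1 with h | h | h
      · exact h
      · exact absurd h hn₂
      · nlinarith [norm_nonneg κ₁, norm_nonneg κ₂]
    exact ⟨κ₂, κ₁, by rw [heq κ₂]; exact hroot₂, by rw [heq κ₁]; exact hroot₁,
      by rw [mul_comm]; exact hprod, h2, h1,
      fun κ hκ => (hall κ (by rw [← heq κ]; exact hκ)).symm⟩
end

section
/- First-order 2D Godunov–Ryabenkii obstruction: let μ_x ∈ (0,1), μ_y > 0, μ_x + μ_y < 1, and let z ∈ ℂ with |z| > 1 and θ ∈ ℝ with sin θ ≠ 0. If the quantity κ_s⁰(z) + 2i sin θ · κ_s¹(z), where κ_s¹(z) is defined by (z² - 1 + 2μ_x z κ_s⁰(z)) κ_s¹(z) = -μ_y z κ_s⁰(z), is a root of the 2D characteristic equation (z²-1)κ + μ_x z (κ²-1) + 2iμ_y sin θ · z κ = 0, then (2i sin θ)² z κ_s¹(z) (μ_y + μ_x κ_s¹(z)) = 0. -/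
/-!
Write `s = 2i sin θ`. Expanding the 2D characteristic polynomial at `κ_s⁰ + s κ_s¹` in powers
of `s`, the constant term is the 1D characteristic polynomial at `κ_s⁰`, the linear term is the
defining equation of `κ_s¹`, and the quadratic term is `s² z κ_s¹ (μ_y + μ_x κ_s¹)`; so if the
first two vanish, a root forces the third to vanish.
-/

theorem leapfrog_char_eq_zero_of_root {K : Type*} [Field K] {μ z κ : K} (hμ : μ ≠ 0)
    (hz : z ≠ 0) (h : κ ^ 2 + ((z - z⁻¹) / μ) * κ - 1 = 0) :
    (z ^ 2 - 1) * κ + μ * z * (κ ^ 2 - 1) = 0 := by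
  field_simp at h
  linear_combination h

theorem second_order_term_eq_zero {R : Type*} [CommRing R] {a b z κ₀ κ₁ s : R}
    (h₀ : (z ^ 2 - 1) * κ₀ + a * z * (κ₀ ^ 2 - 1) = 0)
    (h₁ : (z ^ 2 - 1 + 2 * a * z * κ₀) * κ₁ = -b * z * κ₀)
    (h : (z ^ 2 - 1) * (κ₀ + s * κ₁) + a * z * ((κ₀ + s * κ₁) ^ 2 - 1)
      + b * s * z * (κ₀ + s * κ₁) = 0) :
    s ^ 2 * z * κ₁ * (b + a * κ₁) = 0 := by
  linear_combination h - h₀ - s * h₁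

theorem first_order_gr_obstruction_general (μx μy : ℝ) (hμx0 : 0 < μx)
    (z : ℂ) (hz : 1 < ‖z‖) (θ : ℝ)
    (κs0 : ℂ) (hκs0_root : κs0 ^ 2 + ((z - z⁻¹) / (μx : ℂ)) * κs0 - 1 = 0)
    (κs1 : ℂ) (hκs1 : (z ^ 2 - 1 + 2 * (μx : ℂ) * z * κs0) * κs1 = -(μy : ℂ) * z * κs0)
    (hroot : (z ^ 2 - 1) * (κs0 + 2 * Complex.I * (Real.sin θ : ℂ) * κs1)
        + (μx : ℂ) * z * ((κs0 + 2 * Complex.I * (Real.sin θ : ℂ) * κs1) ^ 2 - 1)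
        + 2 * Complex.I * (μy : ℂ) * (Real.sin θ : ℂ) * z
          * (κs0 + 2 * Complex.I * (Real.sin θ : ℂ) * κs1) = 0) :
    (2 * Complex.I * (Real.sin θ : ℂ)) ^ 2 * z * κs1 * ((μy : ℂ) + (μx : ℂ) * κs1)
      = 0 := by
  have hz0 : z ≠ 0 := norm_pos_iff.mp (one_pos.trans hz)
  have hμx : (μx : ℂ) ≠ 0 := Complex.ofReal_ne_zero.mpr hμx0.ne'
  refine second_order_term_eq_zero
    (leapfrog_char_eq_zero_of_root hμx hz0 hκs0_root) hκs1 ?_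
  linear_combination hroot

/-- First-order 2D Godunov–Ryabenkii obstruction: if the first-order expansion
`κ_s⁰(z) + 2i sin θ · κ_s¹(z)` is a root of the 2D leap-frog characteristic
equation, then `(2i sin θ)² z κ_s¹(z) (μ_y + μ_x κ_s¹(z)) = 0`. -/
theorem first_order_gr_obstruction (μx μy : ℝ) (hμx0 : 0 < μx) (hμx1 : μx < 1)
    (hμy : 0 < μy) (hcfl : μx + μy < 1)
    (z : ℂ) (hz : 1 < ‖z‖) (θ : ℝ) (hθ : Real.sin θ ≠ 0)
    (κs0 : ℂ) (hκs0_root : κs0 ^ 2 + ((z - z⁻¹) / (μx : ℂ)) * κs0 - 1 = 0)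
    (hκs0_stable : ‖κs0‖ < 1)
    (κs1 : ℂ) (hκs1 : (z ^ 2 - 1 + 2 * (μx : ℂ) * z * κs0) * κs1 = -(μy : ℂ) * z * κs0)
    (hroot : (z ^ 2 - 1) * (κs0 + 2 * Complex.I * (Real.sin θ : ℂ) * κs1)
        + (μx : ℂ) * z * ((κs0 + 2 * Complex.I * (Real.sin θ : ℂ) * κs1) ^ 2 - 1)
        + 2 * Complex.I * (μy : ℂ) * (Real.sin θ : ℂ) * z
          * (κs0 + 2 * Complex.I * (Real.sin θ : ℂ) * κs1) = 0) :
    (2 * Complex.I * (Real.sin θ : ℂ)) ^ 2 * z * κs1 * ((μy : ℂ) + (μx : ℂ) * κs1)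
      = 0 :=
  first_order_gr_obstruction_general μx μy hμx0 z hz θ κs0 hκs0_root κs1 hκs1 hroot
end
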